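/- arXiv:1511.03022 — 2 statements merged into one kernel-verified Lean document; each statement's English description precedes it below -/
import Mathlib

section
/- Let V be a smooth hypersurface of degree d and even dimension n ≥ 2 over a number field E, with middle Betti quadratic form q_B (cup product on H^n(V(C), Q) followed by the trace). Then w_1(q_B) = (n/2)(d−1)·(−1) in E^×/(E^×)^2, i.e. disc(q_B) = (−1)^{(n/2)(d−1)} up to squares. -/
/-! The middle Betti number is `b = r + s = 2 - ∑_{i < n+2} (1-d)^i`, and `2s = b - τ`.
Pairing consecutive terms, `∑_{i < n+2} (1-d)^i = (2-d) ∑_{j ≤ n/2} (1-d)^{2j}`, where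
`(1-d)^2 ≡ 1` or `0 mod 4` as `d` is even or odd. This gives `b ≡ τ + n(d-1) mod 4`,
hence `s ≡ (n/2)(d-1) mod 2`. -/

open Finset

theorem geom_sum_two_mul {R : Type*} [CommRing R] (u : R) (k : ℕ) :
    ∑ i ∈ range (2 * k), u ^ i = (1 + u) * ∑ j ∈ range k, (u ^ 2) ^ j := by
  induction k with
  | zero => simp
  | succ k ih =>
    rw [show 2 * (k + 1) = 2 * k + 1 + 1 by ring, sum_range_succ, sum_range_succ, ih,
      sum_range_succ]
    ring

theorem eq_two_sub_geom_sum_of_mul_eq {b d : ℤ} {k : ℕ} (hd : d ≠ 0)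
    (h : b * d = 2 * d + ((1 - d) ^ k - 1)) : b = 2 - ∑ i ∈ range k, (1 - d) ^ i := by
  have hgeom := geom_sum_mul_neg (1 - d) k
  rw [sub_sub_cancel] at hgeom
  exact mul_right_cancel₀ hd (by linear_combination h + hgeom)

theorem two_sub_geom_sum_one_sub_modEq (d : ℤ) {n : ℕ} (hn : Even n) :
    2 - ∑ i ∈ range (n + 2), (1 - d) ^ i ≡
      (if Even d ∧ n % 4 = 2 then 0 else d) + n * (d - 1) [ZMOD 4] := by
  obtain ⟨m, rfl⟩ := hn
  rw [show m + m + 2 = 2 * (m + 1) by ring, geom_sum_two_mul]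
  rcases Int.even_or_odd d with ⟨e, rfl⟩ | ⟨e, rfl⟩
  · have hsq : (1 - (e + e)) ^ 2 ≡ 1 [ZMOD 4] :=
      Int.modEq_iff_dvd.2 ⟨e - e ^ 2, by ring⟩
    have hsum : ∑ j ∈ range (m + 1), ((1 - (e + e)) ^ 2) ^ j ≡ m + 1 [ZMOD 4] := by
      simpa using Int.ModEq.sum (s := range (m + 1)) fun j _ => hsq.pow j
    refine ((hsum.mul_left _).sub_left 2).trans ?_
    rcases Nat.even_or_odd m with ⟨t, rfl⟩ | ⟨t, rfl⟩
    · rw [if_neg (by omega)]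
      exact Int.modEq_iff_dvd.2 ⟨t * e, by push_cast; ring⟩
    · rw [if_pos ⟨⟨e, rfl⟩, by omega⟩]
      exact Int.modEq_iff_dvd.2 ⟨t * e, by push_cast; ring⟩
  · have hsq : (1 - (2 * e + 1)) ^ 2 ≡ 0 [ZMOD 4] :=
      Int.modEq_iff_dvd.2 ⟨-e ^ 2, by ring⟩
    have hsum : ∑ j ∈ range (m + 1), ((1 - (2 * e + 1)) ^ 2) ^ j ≡ 1 [ZMOD 4] := by
      simpa only [zero_geom_sum, if_neg m.succ_ne_zero] using
        Int.ModEq.sum (s := range (m + 1)) fun j _ => hsq.pow j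
    refine ((hsum.mul_left _).sub_left 2).trans ?_
    rw [if_neg fun h => Int.not_even_two_mul_add_one e h.1]
    exact Int.modEq_iff_dvd.2 ⟨m * e, by push_cast; ring⟩

theorem stmt_7_general (n d : ℕ) (hne : Even n) (hd : 1 ≤ d)
    (r s : ℤ)
    (hrank : (r + s) * d = 2 * d + ((1 - (d : ℤ)) ^ (n + 2) - 1))
    (htau : r - s ≡ (if Even d ∧ n % 4 = 2 then 0 else (d : ℤ)) [ZMOD 8]) :
    s ≡ ((n / 2 : ℕ) : ℤ) * ((d : ℤ) - 1) [ZMOD 2] := by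
  have hbetti := two_sub_geom_sum_one_sub_modEq (d : ℤ) hne
  rw [← eq_two_sub_geom_sum_of_mul_eq (by omega) hrank] at hbetti
  simp only [Int.even_coe_nat] at hbetti
  obtain ⟨m, rfl⟩ := hne
  have htwice : 2 * s ≡ 2 * (m * (d - 1)) [ZMOD 2 * 2] :=
    calc 2 * s = (r + s) - (r - s) := by ring
      _ ≡ _ - _ [ZMOD 4] := hbetti.sub (htau.of_dvd (by norm_num))
      _ = 2 * (m * (d - 1)) := by push_cast; ring
  rw [show (m + m) / 2 = m by omega]
  exact Int.ModEq.mul_left_cancel' two_ne_zero htwice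

/-- **First Hasse–Witt invariant of the middle Betti form of a hypersurface.**
`V` is a smooth hypersurface of degree `d` and even dimension `n ≥ 2` over a
number field; the middle Betti form `q_B` is unimodular of rank
`b_n = 2 + (1/d)[(1−d)^{n+2}−1]` with real signature `(r, s)` (so that
`w_1(q_B) = s·(−1)`, i.e. `disc(q_B) = (−1)^s` up to squares), and by the
index theorem the signature `τ = r − s` satisfies `τ ≡ 0 mod 8` if `d` is
even and `n ≡ 2 mod 4`, and `τ ≡ d mod 8` otherwise.  Then
`w_1(q_B) = (n/2)(d−1)·(−1)`, i.e. `s ≡ (n/2)(d−1) mod 2`. -/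
theorem stmt_7 (n d : ℕ) (hn : 2 ≤ n) (hne : Even n) (hd : 1 ≤ d)
    (r s : ℤ) (hr : 0 ≤ r) (hs : 0 ≤ s)
    (hrank : (r + s) * d = 2 * d + ((1 - (d : ℤ)) ^ (n + 2) - 1))
    (htau : r - s ≡ (if Even d ∧ n % 4 = 2 then 0 else (d : ℤ)) [ZMOD 8]) :
    s ≡ ((n / 2 : ℕ) : ℤ) * ((d : ℤ) - 1) [ZMOD 2] :=
  stmt_7_general n d hne hd r s hrank htau
end

section
/- Let A be a finite-dimensional Hopf algebra over a field k of characteristic ≠ 2, with linear dual A^D = Hom_k(A,k), antipode S^D on A^D, and let θ be a generator of the (one-dimensional) space of left integrals of A. Then the bilinear form κ_θ(u,v) = (S^D(u)·v)(θ) on A^D is non-degenerate. -/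
/-!
Write `Δθ = Σ θ₁ ⊗ θ₂`. Since `θ` is a left integral, `Σ xθ₁ ⊗ S(θ₂) = Σ θ₁ ⊗ S(θ₂)x` for every
`x`. So if `u ∈ A^D` satisfies `Σ u(S θ₂) θ₁ = 0`, then `Σ f(θ₁) u(S(θ₂)x) = 0` for all `f` and
`x`; as rank-one operators span `End(A)`, also `Σ u(S(θ₂) y(θ₁)) = 0` for every `y ∈ End(A)`.
For `y(a) = Σ f(a₁) S²(a₂) z` with `f(θ) ≠ 0` this sum is `f(θ) u(z)`, whence `u = 0`.
Taking `u` to vanish on the image of `S` shows that `S` is bijective, and then that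
`g ↦ Σ g(θ₂) θ₁` is injective. As `κ_θ(u, v) = u(S(Σ v(θ₂) θ₁))`, the form `κ_θ` is
non-degenerate in `v`, hence, `A^D` being finite-dimensional, also in `u`.
-/

open TensorProduct

/-- The unit form `κ_θ` of a Hopf algebra `A`: for `u, v ∈ A^D = Hom_k(A, k)`,
`κ_θ(u, v) = (S^D(u)·v)(θ)`, where the product on `A^D` is the convolution
product dual to the comultiplication of `A` and `S^D(u) = u ∘ S`; explicitly
`κ_θ(u, v) = Σ_{(θ)} u(S(θ₍₁₎))·v(θ₍₂₎)`. -/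
noncomputable def kappa (k : Type*) {A : Type*} [CommRing k] [Ring A]
    [HopfAlgebra k A] (θ : A)
    (u v : Module.Dual k A) : k :=
  LinearMap.mul' k k
    ((TensorProduct.map (u ∘ₗ HopfAlgebra.antipode (R := k)) v)
      (Coalgebra.comul (R := k) θ))

open scoped Coalgebra

section Coalgebra

variable {k C M : Type*} [CommSemiring k] [AddCommMonoid C] [Module k C] [Coalgebra k C]
  [AddCommMonoid M] [Module k M]

local notation "Δ" => Coalgebra.comul (R := k)

theorem Coalgebra.apply_comul_eq_of_coassoc (L : C ⊗[k] (C ⊗[k] C) →ₗ[k] M)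
    (H H' : C ⊗[k] C →ₗ[k] M) (hl : ∀ a b, L (a ⊗ₜ Δ b) = H (a ⊗ₜ b))
    (hr : ∀ a c, L (_root_.TensorProduct.assoc k C C C (Δ a ⊗ₜ c)) = H' (a ⊗ₜ c)) (x : C) :
    H (Δ x) = H' (Δ x) := by
  have hH : L ∘ₗ (Δ).lTensor C = H := TensorProduct.ext' hl
  have hH' : L ∘ₗ (_root_.TensorProduct.assoc k C C C).toLinearMap ∘ₗ (Δ).rTensor C = H' :=
    TensorProduct.ext' hr
  rw [← hH, ← hH']
  simp

variable (k) in
def Coalgebra.leftHit (c : C) : Module.Dual k C →ₗ[k] C where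
  toFun g := _root_.TensorProduct.rid k C (g.lTensor C (Δ c))
  map_add' g h := by simp [LinearMap.lTensor_add]
  map_smul' a g := by simp [LinearMap.lTensor_smul]

theorem Coalgebra.leftHit_eq_sum {c : C} {ι : Type*} (r : Coalgebra.Repr k c ι)
    (g : Module.Dual k C) : Coalgebra.leftHit k c g = ∑ i ∈ r.index, g (r.right i) • r.left i := by
  simp [Coalgebra.leftHit, ← r.eq, map_sum]

end Coalgebra

theorem sum_apply_eq_zero_of_forall_rankOne {R V M ι : Type*} [CommSemiring R]
    [AddCommMonoid V] [Module R V] [Module.Free R V] [Module.Finite R V]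
    [AddCommMonoid M] [Module R M] (s : Finset ι) (a : ι → V) (g : ι → V →ₗ[R] M)
    (h : ∀ (f : Module.Dual R V) (x : V), ∑ i ∈ s, f (a i) • g i x = 0) (y : V →ₗ[R] V) :
    ∑ i ∈ s, g i (y (a i)) = 0 := by
  let b := Module.Free.chooseBasis R V
  calc ∑ i ∈ s, g i (y (a i)) = ∑ i ∈ s, ∑ j, b.coord j (a i) • g i (y (b j)) := by
        refine Finset.sum_congr rfl fun i _ => ?_
        conv_lhs => rw [← b.sum_repr (a i)]
        simp only [map_sum, map_smul, Module.Basis.coord_apply]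
    _ = ∑ j, ∑ i ∈ s, b.coord j (a i) • g i (y (b j)) := Finset.sum_comm
    _ = 0 := Finset.sum_eq_zero fun j _ => h _ _

theorem LinearMap.SeparatingRight.separatingLeft {K V W : Type*} [Field K]
    [AddCommGroup V] [Module K V] [FiniteDimensional K V]
    [AddCommGroup W] [Module K W] [FiniteDimensional K W]
    (hVW : Module.finrank K V = Module.finrank K W) {B : V →ₗ[K] W →ₗ[K] K}
    (hB : B.SeparatingRight) : B.SeparatingLeft := by
  have hinj : Function.Injective B.flip :=
    LinearMap.ker_eq_bot.mp (LinearMap.separatingRight_iff_flip_ker_eq_bot.mp hB)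
  have hsurj : Function.Surjective B.flip :=
    (LinearMap.injective_iff_surjective_of_finrank_eq_finrank
      (by rw [Subspace.dual_finrank_eq, hVW])).mp hinj
  intro x hx
  rw [← Module.forall_dual_apply_eq_zero_iff K x]
  intro φ
  obtain ⟨y, rfl⟩ := hsurj φ
  exact hx y

section Hopf

variable {k A : Type*} [CommSemiring k] [Semiring A] [HopfAlgebra k A]

local notation "ε" => Coalgebra.counit (R := k)
local notation "Δ" => Coalgebra.comul (R := k)
local notation "𝒮" => HopfAlgebra.antipode k

variable (k) in
def IsLeftIntegral (θ : A) : Prop :=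
  ∀ a : A, a * θ = ε a • θ

/-- In Sweedler notation: `Σ f(a₁) S(a₃) S²(a₂) = f(a) • 1`. -/
theorem HopfAlgebra.sum_antipode_mul_antipode_antipode {a : A} {ι : Type*}
    (r : Coalgebra.Repr k a ι) (f : Module.Dual k A) :
    ∑ i ∈ r.index, 𝒮 (r.right i) * 𝒮 (𝒮 (TensorProduct.lid k A (f.rTensor A (Δ (r.left i))))) =
      f a • 1 := by
  have := Coalgebra.apply_comul_eq_of_coassoc
    (TensorProduct.lid k A ∘ₗ TensorProduct.map f
      (𝒮 ∘ₗ LinearMap.mul' k A ∘ₗ TensorProduct.map 𝒮 LinearMap.id))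
    (f.smulRight (1 : A) ∘ₗ (TensorProduct.rid k A).toLinearMap ∘ₗ (Coalgebra.counit).lTensor A)
    (LinearMap.mul' k A ∘ₗ TensorProduct.comm k A A ∘ₗ TensorProduct.map
      (𝒮 ∘ₗ 𝒮 ∘ₗ (TensorProduct.lid k A).toLinearMap ∘ₗ f.rTensor A ∘ₗ Δ) 𝒮)
    (fun a b => by
      rw [← (ℛ k b).eq]
      simp only [map_sum, tmul_sum]
      simp [← Finset.smul_sum, ← map_sum, HopfAlgebra.sum_antipode_mul_eq_smul, smul_smul,
        mul_comm])
    (fun a c => by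
      simp only [LinearMap.coe_comp, LinearEquiv.coe_coe, Function.comp_apply, map_tmul,
        comm_tmul, LinearMap.mul'_apply]
      rw [← (ℛ k a).eq]
      simp [map_sum, sum_tmul, HopfAlgebra.antipode_mul_antidistrib, Finset.mul_sum])
    a
  simp only [LinearMap.coe_comp, Function.comp_apply, Coalgebra.lTensor_counit_comul] at this
  rw [← r.eq] at this
  simpa [map_sum] using this.symm

theorem IsLeftIntegral.sum_mul_tmul_antipode {θ : A} (hθ : IsLeftIntegral k θ) {ι : Type*}
    (r : Coalgebra.Repr k θ ι) (x : A) :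
    ∑ i ∈ r.index, (x * r.left i) ⊗ₜ[k] 𝒮 (r.right i) =
      ∑ i ∈ r.index, r.left i ⊗ₜ[k] (𝒮 (r.right i) * x) := by
  -- both sides are `Σ x₁θ₁ ⊗ S(x₂θ₂)x₃`, bracketed in the two possible ways
  have := Coalgebra.apply_comul_eq_of_coassoc
    (∑ i ∈ r.index, TensorProduct.map (LinearMap.mulRight k (r.left i))
      (LinearMap.mul' k A ∘ₗ
        TensorProduct.map (𝒮 ∘ₗ LinearMap.mulRight k (r.right i)) LinearMap.id))
    ((∑ i ∈ r.index, (TensorProduct.mk k A A).flip (𝒮 (r.right i)) ∘ₗ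
      LinearMap.mulRight k (r.left i)) ∘ₗ (TensorProduct.rid k A).toLinearMap ∘ₗ
        (Coalgebra.counit).lTensor A)
    ((∑ i ∈ r.index, TensorProduct.mk k A A (r.left i) ∘ₗ LinearMap.mulLeft k (𝒮 (r.right i))) ∘ₗ
      (TensorProduct.lid k A).toLinearMap ∘ₗ (Coalgebra.counit).rTensor A)
    (fun a b => by
      rw [← (ℛ k b).eq]
      simp only [map_sum, tmul_sum]
      simp only [LinearMap.coe_sum, Finset.sum_apply, map_tmul, LinearMap.mulRight_apply,
        LinearMap.coe_comp, Function.comp_apply, HopfAlgebra.antipode_mul_antidistrib,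
        LinearMap.id_coe, id_eq, LinearMap.mul'_apply, mul_assoc, LinearEquiv.coe_coe,
        LinearMap.lTensor_tmul, rid_tmul, map_smul, LinearMap.flip_apply, mk_apply]
      rw [Finset.sum_comm]
      refine Finset.sum_congr rfl fun i _ => ?_
      rw [← tmul_sum, ← Finset.mul_sum, HopfAlgebra.sum_antipode_mul_eq_smul, mul_smul_comm,
        mul_one, tmul_smul])
    (fun a c => by
      have h : ∑ p ∈ ((ℛ k a).mul r).index, ((ℛ k a).mul r).left p ⊗ₜ[k] ((ℛ k a).mul r).right p =
          ε a • ∑ i ∈ r.index, r.left i ⊗ₜ[k] r.right i := by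
        rw [((ℛ k a).mul r).eq, hθ a, map_smul, r.eq]
      have := congrArg (TensorProduct.map LinearMap.id (LinearMap.mulRight k c ∘ₗ 𝒮)) h
      rw [← (ℛ k a).eq]
      simp only [map_sum, map_smul] at this
      simpa [sum_tmul, Finset.smul_sum, Finset.sum_product] using this)
    x
  simpa using this

end Hopf

section UnitForm

variable {k A : Type*} [CommRing k] [Ring A] [HopfAlgebra k A]

variable (k) in
def kappaForm (θ : A) : Module.Dual k A →ₗ[k] Module.Dual k A →ₗ[k] k :=
  (Module.Dual.eval k A ∘ₗ HopfAlgebra.antipode k ∘ₗ Coalgebra.leftHit k θ).flip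

theorem kappaForm_apply (θ : A) (u v : Module.Dual k A) : kappaForm k θ u v = kappa k θ u v := by
  simp only [kappaForm, LinearMap.flip_apply, LinearMap.coe_comp, Function.comp_apply,
    Module.Dual.eval_apply, Coalgebra.leftHit_eq_sum (ℛ k θ), kappa]
  rw [← (ℛ k θ).eq]
  simp [map_sum, mul_comm]

end UnitForm

section FiniteDimensional

variable {k A : Type*} [Field k] [Ring A] [HopfAlgebra k A] [FiniteDimensional k A]

local notation "Δ" => Coalgebra.comul (R := k)
local notation "𝒮" => HopfAlgebra.antipode k (A := A)

theorem IsLeftIntegral.eq_zero_of_leftHit_comp_antipode_eq_zero {θ : A} (hθ : IsLeftIntegral k θ)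
    (hθ0 : θ ≠ 0) {u : Module.Dual k A} (hu : Coalgebra.leftHit k θ (u ∘ₗ 𝒮) = 0) : u = 0 := by
  let r := ℛ k θ
  have hrankOne : ∀ (f : Module.Dual k A) (x : A),
      ∑ i ∈ r.index, f (r.left i) • (u ∘ₗ LinearMap.mulLeft k (𝒮 (r.right i))) x = 0 := by
    intro f x
    have h := congrArg (LinearMap.mul' k k ∘ₗ TensorProduct.map f u) (hθ.sum_mul_tmul_antipode r x)
    have h0 := congrArg (f ∘ₗ LinearMap.mulLeft k x) hu
    rw [Coalgebra.leftHit_eq_sum r] at h0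
    simp only [map_sum, map_smul, LinearMap.coe_comp, Function.comp_apply, map_tmul,
      LinearMap.mul'_apply, LinearMap.mulLeft_apply, map_zero, smul_eq_mul] at h h0 ⊢
    rw [← h]
    simpa [mul_comm] using h0
  obtain ⟨f, hf⟩ : ∃ f : Module.Dual k A, f θ ≠ 0 := by
    by_contra! h
    exact hθ0 ((Module.forall_dual_apply_eq_zero_iff k θ).mp h)
  ext z
  have hvanish := sum_apply_eq_zero_of_forall_rankOne r.index r.left _ hrankOne
    (LinearMap.mulRight k z ∘ₗ 𝒮 ∘ₗ 𝒮 ∘ₗ (TensorProduct.lid k A).toLinearMap ∘ₗ f.rTensor A ∘ₗ Δ)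
  have hcollapse := congrArg (u ∘ₗ LinearMap.mulRight k z)
    (HopfAlgebra.sum_antipode_mul_antipode_antipode r f)
  simp only [LinearMap.coe_comp, LinearEquiv.coe_coe, Function.comp_apply,
    LinearMap.mulRight_apply, LinearMap.mulLeft_apply, map_sum, mul_assoc, map_smul, one_mul,
    smul_eq_mul] at hvanish hcollapse
  simpa using (mul_eq_zero.mp (hcollapse.symm.trans hvanish)).resolve_left hf

theorem IsLeftIntegral.antipode_bijective {θ : A} (hθ : IsLeftIntegral k θ) (hθ0 : θ ≠ 0) :
    Function.Bijective 𝒮 := by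
  have hsurj : Function.Surjective 𝒮 := LinearMap.dualMap_injective_iff.mp <|
    (injective_iff_map_eq_zero _).mpr fun u hu =>
      hθ.eq_zero_of_leftHit_comp_antipode_eq_zero hθ0
        (by rw [← LinearMap.dualMap_apply', hu, map_zero])
  exact ⟨LinearMap.injective_iff_surjective.mpr hsurj, hsurj⟩

theorem IsLeftIntegral.leftHit_injective {θ : A} (hθ : IsLeftIntegral k θ) (hθ0 : θ ≠ 0) :
    Function.Injective (Coalgebra.leftHit k θ) :=
  have h : Function.Injective (Coalgebra.leftHit k θ ∘ₗ (𝒮).dualMap) :=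
    (injective_iff_map_eq_zero _).mpr fun _ hu =>
      hθ.eq_zero_of_leftHit_comp_antipode_eq_zero hθ0 hu
  Function.Injective.of_comp_right (f := Coalgebra.leftHit k θ) (g := (𝒮).dualMap) h
    (LinearMap.dualMap_surjective_iff.mpr (hθ.antipode_bijective hθ0).1)

theorem IsLeftIntegral.kappaForm_nondegenerate {θ : A} (hθ : IsLeftIntegral k θ) (hθ0 : θ ≠ 0) :
    (kappaForm k θ).Nondegenerate := by
  have hright : (kappaForm k θ).SeparatingRight := by
    rw [LinearMap.separatingRight_iff_flip_ker_eq_bot, kappaForm, LinearMap.flip_flip,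
      LinearMap.ker_eq_bot, LinearMap.coe_comp, LinearMap.coe_comp]
    exact (Module.eval_apply_injective k).comp
      ((hθ.antipode_bijective hθ0).1.comp (hθ.leftHit_injective hθ0))
  exact ⟨hright.separatingLeft rfl, hright⟩

end FiniteDimensional

theorem stmt_18_general {k : Type*} [Field k]
    {A : Type*} [Ring A] [HopfAlgebra k A] [FiniteDimensional k A]
    (θ : A) (hθ0 : θ ≠ 0)
    (hint : ∀ a : A, a * θ = (Coalgebra.counit (R := k) a) • θ) :
    (∀ u : Module.Dual k A, (∀ v, kappa k θ u v = 0) → u = 0) ∧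
    (∀ v : Module.Dual k A, (∀ u, kappa k θ u v = 0) → v = 0) := by
  simpa only [LinearMap.Nondegenerate, LinearMap.SeparatingLeft, LinearMap.SeparatingRight,
    kappaForm_apply] using IsLeftIntegral.kappaForm_nondegenerate hint hθ0

/-- **Non-degeneracy of the unit form `κ_θ`.**  `A` is a finite-dimensional
Hopf algebra over a field `k` of characteristic ≠ 2 and `θ` is a generator of
the one-dimensional space of left integrals of `A` (`a·θ = ε(a)·θ`).  Then
the bilinear form `κ_θ(u, v) = (S^D(u)·v)(θ)` on `A^D` is non-degenerate
(in both arguments). -/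
theorem stmt_18 {k : Type*} [Field k] (hchar : (2 : k) ≠ 0)
    {A : Type*} [Ring A] [HopfAlgebra k A] [FiniteDimensional k A]
    (θ : A) (hθ0 : θ ≠ 0)
    (hint : ∀ a : A, a * θ = (Coalgebra.counit (R := k) a) • θ)
    (hgen : ∀ θ' : A, (∀ a : A, a * θ' = (Coalgebra.counit (R := k) a) • θ') →
      ∃ t : k, θ' = t • θ) :
    (∀ u : Module.Dual k A, (∀ v, kappa k θ u v = 0) → u = 0) ∧
    (∀ v : Module.Dual k A, (∀ u, kappa k θ u v = 0) → v = 0) :=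
  stmt_18_general θ hθ0 hint
end
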